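/- Let (Y,d) be a metric space, n ≥ 1, K ≥ 0, and let L_K be the set of K-Lipschitz functions R : Yⁿ → [0,1] (max metric on Yⁿ), metrized by δ_t(R,R') = Σ_{i=0}^∞ 2^{-i-1}·|R(t_i) − R'(t_i)| for a fixed sequence t : ℕ → Yⁿ with dense range. Equip the group Iso(Y) of bijective isometries of Y with the topology of pointwise convergence. Then the map Iso(Y) × L_K → L_K sending (g, R) to the function (y_1,…,y_n) ↦ R(g⁻¹(y_1),…,g⁻¹(y_n)) is well defined (the image function is again K-Lipschitz) and is a continuous group action of Iso(Y) on (L_K, δ_t). -/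

import Mathlib

/-- The set `L_K` of `K`-Lipschitz functions `R : Yⁿ → [0,1]`, where `Yⁿ` carries the max
metric (the `Pi` metric on `Fin n → Y`). -/
abbrev LogicSpace (Y : Type*) [MetricSpace Y] (n : ℕ) (K : ℝ) : Type _ :=
  {R : (Fin n → Y) → ℝ //
    (∀ x, R x ∈ Set.Icc (0 : ℝ) 1) ∧ ∀ x y, |R x - R y| ≤ K * dist x y}

/-- `δ_t(R, R') = Σ_{i=0}^∞ 2^{-i-1} · |R(t_i) − R'(t_i)|`. -/
noncomputable def logicDist {Y : Type*} [MetricSpace Y] {n : ℕ} {K : ℝ}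
    (t : ℕ → (Fin n → Y)) (R R' : LogicSpace Y n K) : ℝ :=
  ∑' i : ℕ, (1 / 2 : ℝ) ^ (i + 1) * |R.1 (t i) - R'.1 (t i)|

/-! On `L_K` the metric `δ_t` induces the topology of pointwise convergence. It is a uniformly
convergent series of pointwise continuous terms; conversely `|R(tᵢ) − R'(tᵢ)| ≤ 2^(i+1) δ_t(R, R')`,
so evaluation at each `tᵢ` is `δ_t`-continuous, and since all `R` are `K`-Lipschitz and `t` has
dense range, evaluation `(R, z) ↦ R z` is then jointly `δ_t`-continuous. For pointwise
convergence the action is continuous because `(R, z) ↦ R z` is jointly continuous (uniform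
Lipschitz bound) and `g ↦ g⁻¹ y` is continuous on `Iso(Y)`: `d(g⁻¹ y, g₀⁻¹ y) = d(g x, g₀ x)`
for `x = g₀⁻¹ y`. -/

theorem IsometryEquiv.continuous_symm_apply {X Y : Type*} [TopologicalSpace X]
    [PseudoMetricSpace Y] {φ : X → Y ≃ᵢ Y} (hφ : ∀ y, Continuous fun x => φ x y) (y : Y) :
    Continuous fun x => (φ x).symm y := by
  rw [continuous_iff_continuousAt]
  intro x₀
  have hdist (x : X) : dist ((φ x).symm y) ((φ x₀).symm y) = dist y (φ x ((φ x₀).symm y)) := by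
    rw [← (φ x).dist_eq, IsometryEquiv.apply_symm_apply]
  rw [ContinuousAt, tendsto_iff_dist_tendsto_zero]
  simp only [hdist]
  simpa using ((continuous_const (y := y)).dist (hφ ((φ x₀).symm y))).tendsto x₀

theorem summable_half_pow_succ : Summable fun i : ℕ => (1 / 2 : ℝ) ^ (i + 1) :=
  (summable_nat_add_iff 1).2 summable_geometric_two

namespace LogicSpace

variable {Y : Type*} [MetricSpace Y] {n : ℕ} {K : ℝ}

instance : MulAction (Y ≃ᵢ Y) (LogicSpace Y n K) where
  smul g R := ⟨fun y => R.1 (g.symm ∘ y), fun y => R.2.1 _, fun x y => by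
    have hg : dist (g.symm ∘ x) (g.symm ∘ y) = dist x y := g.symm.isometry.postcomp_pi.dist_eq x y
    simpa only [hg] using R.2.2 (g.symm ∘ x) (g.symm ∘ y)⟩
  one_smul _ := rfl
  mul_smul _ _ _ := rfl

theorem smul_apply (g : Y ≃ᵢ Y) (R : LogicSpace Y n K) (y : Fin n → Y) :
    (g • R).1 y = R.1 fun i => g.symm (y i) :=
  rfl

theorem lipschitzWith (R : LogicSpace Y n K) : LipschitzWith K.toNNReal R.1 :=
  LipschitzWith.of_dist_le' R.2.2

theorem continuous_eval :
    Continuous fun p : LogicSpace Y n K × (Fin n → Y) => p.1.1 p.2 :=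
  continuous_prod_of_continuous_lipschitzWith' _ K.toNNReal (fun R => R.lipschitzWith)
    fun z => (continuous_apply z).comp continuous_subtype_val

theorem abs_sub_le_one (R R' : LogicSpace Y n K) (x : Fin n → Y) : |R.1 x - R'.1 x| ≤ 1 :=
  abs_sub_le_of_nonneg_of_le (R.2.1 x).1 (R.2.1 x).2 (R'.2.1 x).1 (R'.2.1 x).2

theorem logicDist_term_le (t : ℕ → Fin n → Y) (R R' : LogicSpace Y n K) (i : ℕ) :
    (1 / 2 : ℝ) ^ (i + 1) * |R.1 (t i) - R'.1 (t i)| ≤ (1 / 2 : ℝ) ^ (i + 1) :=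
  mul_le_of_le_one_right (by positivity) (abs_sub_le_one R R' (t i))

theorem abs_sub_le_two_pow_mul_logicDist (t : ℕ → Fin n → Y) (R R' : LogicSpace Y n K)
    (i : ℕ) : |R.1 (t i) - R'.1 (t i)| ≤ 2 ^ (i + 1) * logicDist t R R' := by
  have hsum : Summable fun i => (1 / 2 : ℝ) ^ (i + 1) * |R.1 (t i) - R'.1 (t i)| :=
    summable_half_pow_succ.of_nonneg_of_le (fun _ => by positivity) (logicDist_term_le t R R')
  calc |R.1 (t i) - R'.1 (t i)|
      = 2 ^ (i + 1) * ((1 / 2 : ℝ) ^ (i + 1) * |R.1 (t i) - R'.1 (t i)|) := by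
        rw [← mul_assoc, ← mul_pow]; norm_num
    _ ≤ 2 ^ (i + 1) * logicDist t R R' := by
        gcongr
        exact hsum.le_tsum i fun _ _ => by positivity

theorem continuous_logicDist (t : ℕ → Fin n → Y) :
    Continuous fun p : LogicSpace Y n K × LogicSpace Y n K => logicDist t p.1 p.2 := by
  have hev (i : ℕ) : Continuous fun R : LogicSpace Y n K => R.1 (t i) :=
    (continuous_apply (t i)).comp continuous_subtype_val
  refine continuous_tsum (fun i => continuous_const.mul
    (((hev i).comp continuous_fst).sub ((hev i).comp continuous_snd)).abs)
    summable_half_pow_succ fun i p => ?_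
  rw [Real.norm_of_nonneg (by positivity)]
  exact logicDist_term_le t _ _ i

theorem lipschitzWith_eval_of_dist_eq [MetricSpace (LogicSpace Y n K)] {t : ℕ → Fin n → Y}
    (hm : ∀ R R' : LogicSpace Y n K, dist R R' = logicDist t R R') (i : ℕ) :
    LipschitzWith (2 ^ (i + 1)) fun R : LogicSpace Y n K => R.1 (t i) :=
  LipschitzWith.of_dist_le_mul fun R R' => by
    rw [hm, Real.dist_eq]
    exact_mod_cast abs_sub_le_two_pow_mul_logicDist t R R' i

theorem topology_eq_of_dist_eq (m : MetricSpace (LogicSpace Y n K)) {t : ℕ → Fin n → Y}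
    (hm : ∀ R R', @dist _ m.toDist R R' = logicDist t R R') (ht : DenseRange t) :
    m.toUniformSpace.toTopologicalSpace = instTopologicalSpaceSubtype := by
  apply le_antisymm
  · let _ : TopologicalSpace (LogicSpace Y n K) := m.toUniformSpace.toTopologicalSpace
    have hev : Continuous fun p : LogicSpace Y n K × (Fin n → Y) => p.1.1 p.2 :=
      continuous_prod_of_dense_continuous_lipschitzWith' _ K.toNNReal ht
        (fun R => R.lipschitzWith) <| by
          rintro _ ⟨i, rfl⟩
          exact (lipschitzWith_eval_of_dist_eq hm i).continuous
    exact continuous_iff_le_induced.1 <| continuous_pi fun z =>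
      hev.comp (continuous_id.prodMk continuous_const)
  · refine (le_iff_nhds _ _).2 fun R =>
      (@Metric.nhds_basis_ball _ m.toPseudoMetricSpace R).ge_iff.2 fun ε hε => ?_
    have hcont : Continuous fun R' : LogicSpace Y n K => logicDist t R' R :=
      (continuous_logicDist t).comp (continuous_id.prodMk continuous_const)
    have hself : logicDist t R R = 0 := by simp [logicDist]
    simp only [Metric.ball, hm]
    exact hcont.continuousAt.preimage_mem_nhds (Iio_mem_nhds (hself ▸ hε))


theorem continuous_smul [TopologicalSpace (Y ≃ᵢ Y)]
    (hcont : ∀ y, Continuous fun g : Y ≃ᵢ Y => g y) :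
    Continuous fun p : (Y ≃ᵢ Y) × LogicSpace Y n K => p.1 • p.2 := by
  have hsymm (y : Y) : Continuous fun g : Y ≃ᵢ Y => g.symm y :=
    IsometryEquiv.continuous_symm_apply hcont y
  refine continuous_induced_rng.2 (continuous_pi fun y => ?_)
  exact continuous_eval.comp
    (continuous_snd.prodMk (continuous_pi fun i => (hsymm (y i)).comp continuous_fst))

end LogicSpace

theorem stmt_4_general (Y : Type*) [MetricSpace Y] (n : ℕ) (K : ℝ)
    (t : ℕ → (Fin n → Y)) (ht : DenseRange t) :
    let tIso : TopologicalSpace (Y ≃ᵢ Y) :=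
      TopologicalSpace.induced (fun e : Y ≃ᵢ Y => (e : Y → Y)) Pi.topologicalSpace
    ∃ A : (Y ≃ᵢ Y) → LogicSpace Y n K → LogicSpace Y n K,
      (∀ (g : Y ≃ᵢ Y) (R : LogicSpace Y n K) (y : Fin n → Y),
        (A g R).1 y = R.1 (fun i => g.symm (y i))) ∧
      (∀ R : LogicSpace Y n K, A 1 R = R) ∧
      (∀ (g h : Y ≃ᵢ Y) (R : LogicSpace Y n K), A (g * h) R = A g (A h R)) ∧
      (∀ m : MetricSpace (LogicSpace Y n K),
        (∀ R R', @dist _ m.toDist R R' = logicDist t R R') →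
        @Continuous ((Y ≃ᵢ Y) × LogicSpace Y n K) (LogicSpace Y n K)
          (@instTopologicalSpaceProd _ _ tIso m.toUniformSpace.toTopologicalSpace)
          m.toUniformSpace.toTopologicalSpace
          (fun p => A p.1 p.2)) := by
  intro tIso
  refine ⟨(· • ·), LogicSpace.smul_apply, one_smul _, mul_smul, fun m hm => ?_⟩
  rw [LogicSpace.topology_eq_of_dist_eq m hm ht]
  exact LogicSpace.continuous_smul fun y => (continuous_apply y).comp continuous_induced_dom

/-- The logic action: the map sending `(g, R)` to
`(y₁, …, yₙ) ↦ R(g⁻¹ y₁, …, g⁻¹ yₙ)` is well defined on `L_K` (the image function is again a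
`K`-Lipschitz `[0,1]`-valued function, witnessed by the existence of the map `A` into
`LogicSpace` with the stated pointwise formula), is a group action of `Iso(Y)` on `L_K`, and
is jointly continuous when `Iso(Y)` carries the topology of pointwise convergence and `L_K`
carries the metric `δ_t`. -/
theorem stmt_4 (Y : Type*) [MetricSpace Y] (n : ℕ) (hn : 1 ≤ n) (K : ℝ) (hK : 0 ≤ K)
    (t : ℕ → (Fin n → Y)) (ht : DenseRange t) :
    let tIso : TopologicalSpace (Y ≃ᵢ Y) :=
      TopologicalSpace.induced (fun e : Y ≃ᵢ Y => (e : Y → Y)) Pi.topologicalSpace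
    ∃ A : (Y ≃ᵢ Y) → LogicSpace Y n K → LogicSpace Y n K,
      (∀ (g : Y ≃ᵢ Y) (R : LogicSpace Y n K) (y : Fin n → Y),
        (A g R).1 y = R.1 (fun i => g.symm (y i))) ∧
      (∀ R : LogicSpace Y n K, A 1 R = R) ∧
      (∀ (g h : Y ≃ᵢ Y) (R : LogicSpace Y n K), A (g * h) R = A g (A h R)) ∧
      (∀ m : MetricSpace (LogicSpace Y n K),
        (∀ R R', @dist _ m.toDist R R' = logicDist t R R') →
        @Continuous ((Y ≃ᵢ Y) × LogicSpace Y n K) (LogicSpace Y n K)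
          (@instTopologicalSpaceProd _ _ tIso m.toUniformSpace.toTopologicalSpace)
          m.toUniformSpace.toTopologicalSpace
          (fun p => A p.1 p.2)) :=
  stmt_4_general Y n K t ht
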